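/- If α is irrational but not badly approximable (i.e., its partial quotients a_j are unbounded), then for every C > 0 there exists n such that the mesh ratio ρ_n of the first n points of the Kronecker sequence iα mod 1 exceeds C; hence the sequence is not quasi-uniform. -/

import Mathlib

open scoped BigOperators

/-- The Gauss-map iterates: `alphaSeq α m` is `α_m`. -/
noncomputable def alphaSeq (α : ℝ) : ℕ → ℝ
  | 0 => Int.fract α
  | m + 1 => Int.fract (1 / alphaSeq α m)

/-- Partial quotients of the continued fraction of `α`: `partialQuot α (m+1) = a_{m+1} = ⌊1/α_m⌋`. -/
noncomputable def partialQuot (α : ℝ) : ℕ → ℕ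
  | 0 => (⌊α⌋).toNat
  | m + 1 => (⌊1 / alphaSeq α m⌋).toNat

/-- `eta α (m+1) = η_m = ∏_{j=0}^m α_j`, with `eta α 0 = η_{-1} = 1`. -/
noncomputable def eta (α : ℝ) : ℕ → ℝ
  | 0 => 1
  | m + 1 => eta α m * alphaSeq α m

/-- `denomSeq α m = s_m`. -/
noncomputable def denomSeq (α : ℝ) : ℕ → ℕ
  | 0 => 1
  | 1 => partialQuot α 1
  | m + 2 => partialQuot α (m + 2) * denomSeq α (m + 1) + denomSeq α m

/-- `denomPred α m = s_{m-1}`, with `s_{-1} = 0`. -/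
noncomputable def denomPred (α : ℝ) : ℕ → ℕ
  | 0 => 0
  | m + 1 => denomSeq α m

/-- `nSeq α m = n_m = s_m + s_{m-1}` (so `n_0 = 1`). -/
noncomputable def nSeq (α : ℝ) (m : ℕ) : ℕ := denomSeq α m + denomPred α m

/-- The Kronecker sequence `x_i = iα mod 1`. -/
noncomputable def kron (α : ℝ) (i : ℕ) : ℝ := Int.fract (i * α)

/-- Fill distance of the first `n` points of `x` in `[0,1]`. -/
noncomputable def fillDist (x : ℕ → ℝ) (n : ℕ) : ℝ :=
  ⨆ y : Set.Icc (0:ℝ) 1, ⨅ i : Fin n, |(y : ℝ) - x i|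

/-- Separation radius of the first `n` points of `x`. -/
noncomputable def sepRad (x : ℕ → ℝ) (n : ℕ) : ℝ :=
  (1 / 2) * ⨅ p : {p : Fin n × Fin n // p.1 < p.2}, |x p.1.1 - x p.1.2|

/-- The first `n` Kronecker points, sorted increasingly. -/
noncomputable def sortedKron (α : ℝ) (n : ℕ) : List ℝ :=
  ((Finset.range n).image (kron α)).sort (· ≤ ·)

/-- The `n` consecutive gap lengths of the first `n` Kronecker points,
including the wrap-around gap up to `1`. -/
noncomputable def kronGaps (α : ℝ) (n : ℕ) : List ℝ :=
  List.zipWith (fun a b => b - a) (sortedKron α n) ((sortedKron α n).tail ++ [1])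

/-!
With `η_{m+1} = α_0 ⋯ α_m`, the convergents `p_m / s_m` of `α` satisfy
`|s_m α - p_m| = η_{m+1}` and `s_{m+1} η_{m+1} + s_m η_{m+2} = 1`, hence
`a_{m+1} s_m |s_m α - p_m| ≤ 1`. Among the first `2 s_m + 1` Kronecker points two are then
`|s_m α - p_m|` apart, while any `n` reals leave some point of `[0,1]` at distance at least
`1 / (2n)` from all of them. So `ρ_{2 s_m + 1} ≥ a_{m+1} / 3`, which is unbounded.
-/

open Set

section ContinuedFraction

variable {α : ℝ}

noncomputable def numSeq (α : ℝ) : ℕ → ℤ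
  | 0 => ⌊α⌋
  | 1 => partialQuot α 1 * ⌊α⌋ + 1
  | m + 2 => partialQuot α (m + 2) * numSeq α (m + 1) + numSeq α m

lemma alphaSeq_nonneg (α : ℝ) (m : ℕ) : 0 ≤ alphaSeq α m := by
  cases m <;> exact Int.fract_nonneg _

lemma alphaSeq_lt_one (α : ℝ) (m : ℕ) : alphaSeq α m < 1 := by
  cases m <;> exact Int.fract_lt_one _

lemma irrational_alphaSeq (h : Irrational α) (m : ℕ) : Irrational (alphaSeq α m) := by
  induction m with
  | zero => exact h.sub_intCast ⌊α⌋
  | succ m ih =>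
    have hinv : Irrational (1 / alphaSeq α m) := by simpa only [one_div] using ih.inv
    exact hinv.sub_intCast _

lemma alphaSeq_pos (h : Irrational α) (m : ℕ) : 0 < alphaSeq α m :=
  (alphaSeq_nonneg α m).lt_of_ne (irrational_alphaSeq h m).ne_zero.symm

lemma one_div_alphaSeq (α : ℝ) (m : ℕ) :
    1 / alphaSeq α m = partialQuot α (m + 1) + alphaSeq α (m + 1) := by
  have hfloor : 0 ≤ ⌊1 / alphaSeq α m⌋ :=
    Int.floor_nonneg.2 (one_div_nonneg.2 (alphaSeq_nonneg α m))
  have hcast : (partialQuot α (m + 1) : ℝ) = ⌊1 / alphaSeq α m⌋ := by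
    rw [partialQuot, ← Int.toNat_of_nonneg hfloor]; rfl
  rw [hcast, alphaSeq, Int.floor_add_fract]

lemma one_le_partialQuot_succ (h : Irrational α) (m : ℕ) : 1 ≤ partialQuot α (m + 1) := by
  have hpos := alphaSeq_pos h m
  have hlt : 1 < 1 / alphaSeq α m := by
    rw [lt_one_div one_pos hpos, div_one]; exact alphaSeq_lt_one α m
  have : (0 : ℝ) < partialQuot α (m + 1) := by
    linarith [one_div_alphaSeq α m, alphaSeq_lt_one α (m + 1)]
  exact_mod_cast this

lemma eta_pos (h : Irrational α) (m : ℕ) : 0 < eta α m := by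
  induction m with
  | zero => exact one_pos
  | succ m ih => exact mul_pos ih (alphaSeq_pos h m)

lemma eta_eq_partialQuot_mul_add (h : Irrational α) (m : ℕ) :
    eta α m = partialQuot α (m + 1) * eta α (m + 1) + eta α (m + 2) := by
  have hpos := alphaSeq_pos h m
  calc eta α m = eta α m * alphaSeq α m * (1 / alphaSeq α m) := by field_simp
    _ = _ := by rw [one_div_alphaSeq]; simp only [eta]; ring

lemma denomSeq_mul_sub_numSeq (h : Irrational α) (m : ℕ) :
    denomSeq α m * α - numSeq α m = (-1) ^ m * eta α (m + 1) := by
  induction m using Nat.twoStepInduction with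
  | zero => simp only [denomSeq, numSeq, eta, alphaSeq, Int.fract]; push_cast; ring
  | one =>
    have hpos := alphaSeq_pos h 0
    have h1 : alphaSeq α 1 = 1 / alphaSeq α 0 - partialQuot α 1 := by
      rw [one_div_alphaSeq]; ring
    have h0 : alphaSeq α 0 = α - ⌊α⌋ := rfl
    simp only [denomSeq, numSeq, eta, h1]
    push_cast
    field_simp
    rw [h0]
    ring
  | more m ih₀ ih₁ =>
    have hrec := eta_eq_partialQuot_mul_add h (m + 1)
    simp only [denomSeq, numSeq]
    push_cast
    linear_combination (partialQuot α (m + 2) : ℝ) * ih₁ + ih₀ + (-1) ^ m * hrec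

lemma denomSeq_mul_eta_add (h : Irrational α) (m : ℕ) :
    denomSeq α (m + 1) * eta α (m + 1) + denomSeq α m * eta α (m + 2) = 1 := by
  induction m with
  | zero =>
    simpa [denomSeq, eta] using (eta_eq_partialQuot_mul_add h 0).symm
  | succ m ih =>
    have hrec := eta_eq_partialQuot_mul_add h (m + 1)
    simp only [denomSeq]
    push_cast
    linear_combination ih - (denomSeq α (m + 1) : ℝ) * hrec

lemma one_le_denomSeq (h : Irrational α) (m : ℕ) : 1 ≤ denomSeq α m := by
  induction m using Nat.twoStepInduction with
  | zero => rfl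
  | one => exact one_le_partialQuot_succ h 0
  | more m ih₀ _ => simp only [denomSeq]; omega

lemma partialQuot_mul_denomSeq_le (α : ℝ) (m : ℕ) :
    partialQuot α (m + 1) * denomSeq α m ≤ denomSeq α (m + 1) := by
  cases m with
  | zero => simp [denomSeq]
  | succ m => exact Nat.le_add_right _ _

lemma partialQuot_mul_denomSeq_mul_eta_le_one (h : Irrational α) (m : ℕ) :
    partialQuot α (m + 1) * denomSeq α m * eta α (m + 1) ≤ 1 := by
  have hle : (partialQuot α (m + 1) * denomSeq α m : ℝ) ≤ denomSeq α (m + 1) := by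
    exact_mod_cast partialQuot_mul_denomSeq_le α m
  have hrest : 0 ≤ (denomSeq α m : ℝ) * eta α (m + 2) := by
    have := eta_pos h (m + 2); positivity
  calc _ ≤ (denomSeq α (m + 1) : ℝ) * eta α (m + 1) := by
        gcongr; exact (eta_pos h (m + 1)).le
    _ ≤ 1 := by linarith [denomSeq_mul_eta_add h m]

lemma exists_partialQuot_mul_mul_abs_sub_le_one (h : Irrational α) (m : ℕ) :
    ∃ q : ℕ, ∃ p : ℤ, 1 ≤ q ∧ 0 < |q * α - p| ∧
      partialQuot α (m + 1) * q * |q * α - p| ≤ 1 := by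
  have habs : |denomSeq α m * α - numSeq α m| = eta α (m + 1) := by
    rw [denomSeq_mul_sub_numSeq h, abs_mul, abs_neg_one_pow, one_mul,
      abs_of_pos (eta_pos h _)]
  refine ⟨denomSeq α m, numSeq α m, one_le_denomSeq h m, ?_, ?_⟩ <;> rw [habs]
  · exact eta_pos h _
  · exact partialQuot_mul_denomSeq_mul_eta_le_one h m

end ContinuedFraction

section MeshRatio

variable {x : ℕ → ℝ} {n : ℕ}

lemma le_fillDist (hn : 0 < n) {y r : ℝ} (hy : y ∈ Icc (0 : ℝ) 1)
    (hr : ∀ i < n, r ≤ |y - x i|) : r ≤ fillDist x n := by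
  have : Nonempty (Fin n) := ⟨⟨0, hn⟩⟩
  have hbdd : BddAbove (range fun z : Icc (0 : ℝ) 1 => ⨅ i : Fin n, |(z : ℝ) - x i|) := by
    refine ⟨1 + |x 0|, ?_⟩
    rintro _ ⟨z, rfl⟩
    calc ⨅ i : Fin n, |(z : ℝ) - x i| ≤ |(z : ℝ) - x 0| :=
          ciInf_le (finite_range _).bddBelow (⟨0, hn⟩ : Fin n)
      _ ≤ |(z : ℝ)| + |x 0| := abs_sub _ _
      _ ≤ 1 + |x 0| := by gcongr; exact abs_le.2 ⟨by linarith [z.2.1], z.2.2⟩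
  exact (le_ciInf fun i : Fin n => hr i i.isLt).trans (le_ciSup hbdd ⟨y, hy⟩)

lemma one_div_two_mul_le_fillDist (x : ℕ → ℝ) (hn : 0 < n) :
    1 / (2 * n) ≤ fillDist x n := by
  have hn' : (0 : ℝ) < n := by exact_mod_cast hn
  -- two of the `n + 1` grid points `k / n` cannot share a nearest point `x i`
  obtain ⟨k, hk⟩ :
      ∃ k : Fin (n + 1), ∀ i : Fin n, 1 / (2 * n) ≤ |(k : ℝ) / n - x i| := by
    by_contra! hnear
    choose f hf using hnear
    obtain ⟨k, l, hkl, hfkl⟩ := Fintype.exists_ne_map_eq_of_card_lt f (by simp)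
    have hdist : |(k : ℝ) / n - l / n| < 1 / n := by
      calc |(k : ℝ) / n - l / n| ≤ |(k : ℝ) / n - x (f k)| + |(l : ℝ) / n - x (f l)| := by
            rw [hfkl, abs_sub_comm ((l : ℝ) / n)]; exact abs_sub_le _ _ _
        _ < 1 / (2 * n) + 1 / (2 * n) := add_lt_add (hf k) (hf l)
        _ = 1 / n := by field_simp; ring
    rw [← sub_div, abs_div, abs_of_pos hn', div_lt_div_iff_of_pos_right hn',
      abs_sub_lt_iff] at hdist
    have h₁ : (k : ℕ) < l + 1 := by exact_mod_cast (by linarith : (k : ℝ) < l + 1)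
    have h₂ : (l : ℕ) < k + 1 := by exact_mod_cast (by linarith : (l : ℝ) < k + 1)
    exact hkl (Fin.ext (by omega))
  have hk_le : (k : ℝ) ≤ n := by exact_mod_cast Nat.lt_succ_iff.1 k.2
  exact le_fillDist hn ⟨by positivity, (div_le_one hn').2 hk_le⟩ fun i hi => hk ⟨i, hi⟩

lemma sepRad_le_abs_sub_div_two {i j : ℕ} (hij : i < j) (hj : j < n) :
    sepRad x n ≤ |x i - x j| / 2 := by
  have := ciInf_le (finite_range fun p : {p : Fin n × Fin n // p.1 < p.2} =>
    |x p.1.1 - x p.1.2|).bddBelow ⟨(⟨i, hij.trans hj⟩, ⟨j, hj⟩), Fin.mk_lt_mk.2 hij⟩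
  rw [sepRad]
  linarith

lemma sepRad_pos (hn : 2 ≤ n) (hx : Function.Injective x) : 0 < sepRad x n := by
  have : Nonempty {p : Fin n × Fin n // p.1 < p.2} :=
    ⟨⟨(⟨0, by omega⟩, ⟨1, hn⟩), Fin.mk_lt_mk.2 one_pos⟩⟩
  obtain ⟨p, hp⟩ := exists_eq_ciInf_of_finite
    (f := fun p : {p : Fin n × Fin n // p.1 < p.2} => |x p.1.1 - x p.1.2|)
  have hne : x p.1.1 ≠ x p.1.2 := hx.ne (Fin.val_injective.ne p.2.ne)
  rw [sepRad, ← hp]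
  have := abs_pos.2 (sub_ne_zero.2 hne)
  positivity

end MeshRatio

lemma kron_injective {α : ℝ} (h : Irrational α) : Function.Injective (kron α) := by
  intro i j hij
  obtain ⟨z, hz⟩ := Int.fract_eq_fract.1 hij
  by_contra hne
  have hsub : ((i : ℤ) - j : ℤ) ≠ 0 := sub_ne_zero.2 (by exact_mod_cast hne)
  exact (h.intCast_mul hsub).ne_int z (by push_cast; linarith)

lemma sepRad_kron_two_mul_add_one_le {α : ℝ} {q : ℕ} {p : ℤ} (hq : 1 ≤ q)
    (he : 2 * |q * α - p| < 1) :
    sepRad (kron α) (2 * q + 1) ≤ |q * α - p| / 2 := by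
  set e := |q * α - p| with he_def
  have he0 : 0 ≤ e := abs_nonneg _
  rcases le_or_gt 0 (q * α - p) with hnonneg | hneg
  · have h0 : kron α 0 = 0 := by simp [kron]
    have hq' : kron α q = e :=
      Int.fract_eq_iff.2 ⟨he0, by linarith, p, by rw [he_def, abs_of_nonneg hnonneg]; ring⟩
    simpa [h0, hq', abs_of_nonneg he0] using
      sepRad_le_abs_sub_div_two (x := kron α) (n := 2 * q + 1) (i := 0) (j := q)
        (by omega) (by omega)
  · have he' : e = p - q * α := by rw [he_def, abs_of_neg hneg]; ring
    have hq' : kron α q = 1 - e :=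
      Int.fract_eq_iff.2 ⟨by linarith, by linarith, p - 1, by push_cast; linarith⟩
    have h2q : kron α (2 * q) = 1 - 2 * e :=
      Int.fract_eq_iff.2 ⟨by linarith, by linarith, 2 * p - 1, by push_cast; linarith⟩
    have := sepRad_le_abs_sub_div_two (x := kron α) (n := 2 * q + 1) (i := q) (j := 2 * q)
      (by omega) (by omega)
    rwa [hq', h2q, show (1 - e) - (1 - 2 * e) = e by ring, abs_of_nonneg he0] at this

theorem kronecker_not_badly_approximable_not_quasi_uniform_general (α : ℝ)
    (hirr : Irrational α) (hub : ∀ B : ℕ, ∃ j ≥ 1, B < partialQuot α j) :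
    ∀ C > (0 : ℝ), ∃ n : ℕ, C < fillDist (kron α) n / sepRad (kron α) n := by
  intro C hC
  obtain ⟨j, hj, hjC⟩ := hub (⌈3 * C⌉₊ + 2)
  obtain ⟨m, rfl⟩ := Nat.exists_eq_add_of_le' hj
  obtain ⟨q, p, hq, he, hqe⟩ := exists_partialQuot_mul_mul_abs_sub_le_one hirr m
  set e := |q * α - p|
  have ha : 3 * C + 2 < partialQuot α (m + 1) := by
    have : ((⌈3 * C⌉₊ + 2 : ℕ) : ℝ) < partialQuot α (m + 1) := Nat.cast_lt.2 hjC
    push_cast at this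
    linarith [Nat.le_ceil (3 * C)]
  have hq' : (1 : ℝ) ≤ q := by exact_mod_cast hq
  have hqe_pos : 0 < q * e := by positivity
  have hsmall : (3 * C + 2) * (q * e) < 1 := by nlinarith
  have h2e : 2 * e < 1 := by nlinarith [le_mul_of_one_le_left he.le hq']
  have hsep_pos := sepRad_pos (x := kron α) (n := 2 * q + 1) (by omega) (kron_injective hirr)
  refine ⟨2 * q + 1, (lt_div_iff₀ hsep_pos).2 ?_⟩
  calc C * sepRad (kron α) (2 * q + 1) ≤ C * (e / 2) := by
        gcongr; exact sepRad_kron_two_mul_add_one_le hq h2e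
    _ < 1 / (2 * (2 * q + 1 : ℕ)) := by
      rw [lt_div_iff₀ (by positivity)]; push_cast; nlinarith
    _ ≤ fillDist (kron α) (2 * q + 1) := one_div_two_mul_le_fillDist (kron α) (by omega)

/-- If `α` is irrational but not badly approximable, the mesh ratio of the
Kronecker sequence is unbounded, so the sequence is not quasi-uniform. -/
theorem kronecker_not_badly_approximable_not_quasi_uniform (α : ℝ) (hpos : 0 < α)
    (hirr : Irrational α) (hub : ∀ B : ℕ, ∃ j ≥ 1, B < partialQuot α j) :
    ∀ C > (0 : ℝ), ∃ n : ℕ, C < fillDist (kron α) n / sepRad (kron α) n :=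
  kronecker_not_badly_approximable_not_quasi_uniform_general α hirr hub
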